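/- arXiv:math/9903096 — 4 statements merged into one kernel-verified Lean document; each statement's English description precedes it below -/
import Mathlib

section
/- The diagonal ℤ_N-action σ(Λ′,Λ″,Λ) = (σ₁Λ′, σ₁Λ″, σ₁Λ) preserves the exponent set: if τ(Λ′) + τ(Λ″) − τ(Λ) ≡ 0 (mod N), then τ(σ₁Λ′) + τ(σ₁Λ″) − τ(σ₁Λ) ≡ 0 (mod N). -/
/-- The set `P_{++}^{(h)}` of shifted integrable weights of affine `sl(N)` at level
`k = h - N`. -/
def Ppp (N h : ℕ) : Set (Fin (N - 1) → ℤ) :=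
  {l | (∀ i, 1 ≤ l i) ∧ ∑ i, l i ≤ (h : ℤ) - 1}

/-- The diagram automorphism `σ₁(λ) = (h - Σⱼ λⱼ, λ₁, …, λ_{N-2})`. -/
def sigma1 (N h : ℕ) (l : Fin (N - 1) → ℤ) : Fin (N - 1) → ℤ :=
  fun i =>
    if (i : ℕ) = 0 then (h : ℤ) - ∑ j, l j
    else l ⟨(i : ℕ) - 1, Nat.lt_of_le_of_lt (Nat.sub_le _ _) i.isLt⟩

/-- The color `τ(λ) = Σ_{i=1}^{N-1} i·(λ_i - 1)`. -/
def color (N : ℕ) (l : Fin (N - 1) → ℤ) : ℤ :=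
  ∑ i : Fin (N - 1), (((i : ℕ) : ℤ) + 1) * (l i - 1)


/-! `σ₁` prepends `h - Σλ` and drops `λ_{N-1}`, moving every other entry one place up, so
`τ(σ₁λ) = τ(λ) + h - N λ_{N-1}`: modulo `N`, `σ₁` shifts the color by `h`. For the three
levels `h' + h'' - h = N`, so the shifts cancel. -/

lemma color_sigma1 (m h : ℕ) (l : Fin (m + 1) → ℤ) :
    color (m + 2) (sigma1 (m + 2) h l)
      = color (m + 2) l + h - ((m : ℤ) + 2) * l (Fin.last m) := by
  have hzero : sigma1 (m + 2) h l (0 : Fin (m + 1))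
      = h - (∑ i : Fin m, l i.castSucc + l (Fin.last m)) := by
    rw [← Fin.sum_univ_castSucc]; rfl
  have hshift (i : Fin m) : sigma1 (m + 2) h l i.succ = l i.castSucc := rfl
  show ∑ i : Fin (m + 1), _ = ∑ i : Fin (m + 1), _ + _ - _
  rw [Fin.sum_univ_succ, Fin.sum_univ_castSucc]
  simp only [hzero, hshift, Fin.val_succ, Fin.val_zero, Fin.val_castSucc, Fin.val_last,
    Nat.cast_add, Nat.cast_one, Nat.cast_zero, add_mul, one_mul, zero_add, Finset.sum_add_distrib,
    Finset.sum_sub_distrib, Finset.sum_const, Finset.card_univ, Fintype.card_fin, nsmul_eq_mul]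
  ring

lemma color_sigma1_modEq {N : ℕ} (hN : 2 ≤ N) (h : ℕ) (l : Fin (N - 1) → ℤ) :
    color N (sigma1 N h l) ≡ color N l + h [ZMOD N] := by
  obtain ⟨m, rfl⟩ : ∃ m, N = m + 2 := ⟨N - 2, by omega⟩
  rw [color_sigma1, Int.modEq_iff_dvd]
  exact ⟨l (Fin.last m), by push_cast; ring⟩

theorem sigma_preserves_exp_general (N m' m'' : ℕ) (hN : 2 ≤ N)
    (Λ' Λ'' Λ : Fin (N - 1) → ℤ)
    (hexp : color N Λ' + color N Λ'' - color N Λ ≡ 0 [ZMOD N]) :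
    color N (sigma1 N (m' + N) Λ') + color N (sigma1 N (m'' + N) Λ'')
      - color N (sigma1 N (m' + m'' + N) Λ) ≡ 0 [ZMOD N] := by
  have hshift := ((color_sigma1_modEq hN (m' + N) Λ').add
    (color_sigma1_modEq hN (m'' + N) Λ'')).sub (color_sigma1_modEq hN (m' + m'' + N) Λ)
  refine hshift.trans ?_
  calc _ = color N Λ' + color N Λ'' - color N Λ + N := by push_cast; ring
    _ ≡ 0 + N [ZMOD N] := hexp.add_right _
    _ ≡ 0 [ZMOD N] := by rw [zero_add]; exact Int.modEq_zero_iff_dvd.2 dvd_rfl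

/-- The diagonal `ℤ_N`-action `σ(Λ′,Λ″,Λ) = (σ₁Λ′, σ₁Λ″, σ₁Λ)` preserves the
exponent set of the diagonal coset
`SU(N)_{m′} × SU(N)_{m″} / SU(N)_{m′+m″}`: if
`τ(Λ′) + τ(Λ″) − τ(Λ) ≡ 0 (mod N)` then
`τ(σ₁Λ′) + τ(σ₁Λ″) − τ(σ₁Λ) ≡ 0 (mod N)`. -/
theorem sigma_preserves_exp (N m' m'' : ℕ) (hN : 2 ≤ N)
    (hm' : 0 < m') (hm'' : 0 < m'')
    (Λ' Λ'' Λ : Fin (N - 1) → ℤ)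
    (hΛ' : Λ' ∈ Ppp N (m' + N)) (hΛ'' : Λ'' ∈ Ppp N (m'' + N))
    (hΛ : Λ ∈ Ppp N (m' + m'' + N))
    (hexp : color N Λ' + color N Λ'' - color N Λ ≡ 0 [ZMOD N]) :
    color N (sigma1 N (m' + N) Λ') + color N (sigma1 N (m'' + N) Λ'')
      - color N (sigma1 N (m' + m'' + N) Λ) ≡ 0 [ZMOD N] :=
  sigma_preserves_exp_general N m' m'' hN Λ' Λ'' Λ hexp
end

section
/- Suppose N is prime. If λ ∈ P_{++}^{(h)} satisfies σ₁^s(λ) = λ for some integer s with 1 ≤ s ≤ N−1, then N divides h and λ = (h/N, …, h/N). Consequently, when N is prime every σ₁-orbit on P_{++}^{(h)} has size 1 or N, and if N does not divide h the action of σ₁ on P_{++}^{(h)} is free. -/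
theorem Function.Periodic.eq_of_prime_card {G α : Type*} [AddGroup G] {p : ℕ} [Fact p.Prime]
    (hG : Nat.card G = p) {f : G → α} {c : G} (hf : Function.Periodic f c) (hc : c ≠ 0)
    (x y : G) : f x = f y := by
  obtain ⟨k, hk⟩ := AddSubgroup.mem_zmultiples_iff.mp
    (mem_zmultiples_of_prime_card hG hc (g' := -x + y))
  rw [← hf.zsmul k x, hk, add_neg_cancel_left]

def extendedWeight (n h : ℕ) (l : Fin n → ℤ) : Fin (n + 1) → ℤ :=
  Fin.cons ((h : ℤ) - ∑ i, l i) l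

section ExtendedWeight

open Fin.NatCast

variable {n h : ℕ} {l : Fin n → ℤ}

theorem sum_extendedWeight : ∑ j, extendedWeight n h l j = h := by
  simp [extendedWeight, Fin.sum_univ_succ]

theorem extendedWeight_eq_const_iff {c : ℤ} :
    extendedWeight n h l = (fun _ => c) ↔ l = (fun _ => c) ∧ (h : ℤ) = (n + 1) * c := by
  constructor
  · intro hl
    refine ⟨funext fun i => congr_fun hl i.succ, ?_⟩
    rw [← sum_extendedWeight (h := h) (l := l), hl, Finset.sum_const, Finset.card_univ,
      Fintype.card_fin, nsmul_eq_mul, Nat.cast_succ]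
  · rintro ⟨rfl, hc⟩
    funext j
    cases j using Fin.cases with
    | zero =>
      change (h : ℤ) - ∑ _ : Fin n, c = c
      rw [Finset.sum_const, Finset.card_univ, Fintype.card_fin, nsmul_eq_mul, hc]
      ring
    | succ i => rfl

theorem sigma1_apply_eq_extendedWeight_castSucc (i : Fin n) :
    sigma1 (n + 1) h l i = extendedWeight n h l i.castSucc := by
  obtain ⟨k, rfl⟩ : ∃ k, n = k + 1 := ⟨n - 1, by have := i.pos; omega⟩
  cases i using Fin.cases with
  | zero => rfl
  | succ i => exact if_neg (Nat.succ_ne_zero i)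

theorem extendedWeight_sigma1_add_one (j : Fin (n + 1)) :
    extendedWeight n h (sigma1 (n + 1) h l) (j + 1) = extendedWeight n h l j := by
  cases j using Fin.lastCases with
  | last =>
    have hsum := (Fin.sum_univ_castSucc _).symm.trans (sum_extendedWeight (h := h) (l := l))
    rw [Fin.last_add_one]
    change (h : ℤ) - ∑ i, sigma1 (n + 1) h l i = _
    simp only [sigma1_apply_eq_extendedWeight_castSucc]
    exact (eq_sub_of_add_eq' hsum).symm
  | cast i =>
    rw [Fin.coeSucc_eq_succ, extendedWeight, Fin.cons_succ, sigma1_apply_eq_extendedWeight_castSucc]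

theorem extendedWeight_iterate_sigma1_add (s : ℕ) (j : Fin (n + 1)) :
    extendedWeight n h ((sigma1 (n + 1) h)^[s] l) (j + s) = extendedWeight n h l j := by
  induction s generalizing j with
  | zero => simp
  | succ s ih =>
    rw [Function.iterate_succ_apply', Nat.cast_succ, ← add_assoc, extendedWeight_sigma1_add_one,
      ih]

theorem sigma1_const {c : ℤ} (hc : (h : ℤ) = (n + 1) * c) :
    sigma1 (n + 1) h (fun _ : Fin n => c) = fun _ => c := by
  funext i
  rw [sigma1_apply_eq_extendedWeight_castSucc, extendedWeight_eq_const_iff.2 ⟨rfl, hc⟩]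

theorem iterate_sigma1_eq_self_iff (hp : (n + 1).Prime) {s : ℕ} (hs₀ : 0 < s) (hs : s < n + 1) :
    (sigma1 (n + 1) h)^[s] l = l ↔ ∃ c : ℤ, l = (fun _ => c) ∧ (h : ℤ) = (n + 1) * c := by
  constructor
  · intro hl
    have : Fact (n + 1).Prime := ⟨hp⟩
    have hperiodic : Function.Periodic (extendedWeight n h l) s := fun j => by
      simpa only [hl] using extendedWeight_iterate_sigma1_add (h := h) (l := l) s j
    have hs_ne : (s : Fin (n + 1)) ≠ 0 := by
      rw [Ne, Fin.ext_iff, Fin.val_natCast, Nat.mod_eq_of_lt hs]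
      exact hs₀.ne'
    exact ⟨_, extendedWeight_eq_const_iff.1 <| funext fun j =>
      hperiodic.eq_of_prime_card (Nat.card_fin _) hs_ne j 0⟩
  · rintro ⟨c, rfl, hc⟩
    exact Function.iterate_fixed (sigma1_const hc) s

end ExtendedWeight

theorem sigma1_prime_orbits_general (N h : ℕ) (hN : N.Prime) :
    (∀ l ∈ Ppp N h, ∀ s : ℕ, 1 ≤ s → s ≤ N - 1 → (sigma1 N h)^[s] l = l →
        N ∣ h ∧ l = fun _ => (h : ℤ) / (N : ℤ)) ∧
    (∀ l ∈ Ppp N h,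
        sigma1 N h l = l ∨ ∀ s : ℕ, 1 ≤ s → s < N → (sigma1 N h)^[s] l ≠ l) ∧
    (¬ N ∣ h → ∀ l ∈ Ppp N h, ∀ s : ℕ, 1 ≤ s → s ≤ N - 1 →
        (sigma1 N h)^[s] l ≠ l) := by
  obtain ⟨n, rfl⟩ : ∃ n, N = n + 1 := ⟨N - 1, (Nat.sub_add_cancel hN.one_lt.le).symm⟩
  have fixed : ∀ (l : Fin n → ℤ) (s : ℕ), 1 ≤ s → s ≤ n →
      (sigma1 (n + 1) h)^[s] l = l →
      n + 1 ∣ h ∧ l = fun _ => (h : ℤ) / ((n + 1 : ℕ) : ℤ) := by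
    intro l s hs₁ hs hl
    obtain ⟨c, rfl, hc⟩ := (iterate_sigma1_eq_self_iff hN hs₁ (by omega)).1 hl
    have hc' : (h : ℤ) = ((n + 1 : ℕ) : ℤ) * c := by push_cast; exact hc
    refine ⟨Int.natCast_dvd_natCast.1 ⟨c, hc'⟩, ?_⟩
    rw [hc', Int.mul_ediv_cancel_left _ (by positivity)]
  refine ⟨fun l _ s hs₁ hs => fixed l s hs₁ hs, fun l _ => ?_,
    fun hndvd l _ s hs₁ hs hl => hndvd (fixed l s hs₁ hs hl).1⟩
  by_cases hl₁ : sigma1 (n + 1) h l = l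
  · exact .inl hl₁
  · refine .inr fun s hs₁ hs hl => hl₁ ?_
    exact (iterate_sigma1_eq_self_iff (s := 1) hN one_pos hN.one_lt).2
      ((iterate_sigma1_eq_self_iff hN hs₁ hs).1 hl)

/-- If `N` is prime and `σ₁^s(λ) = λ` for some `1 ≤ s ≤ N-1` and
`λ ∈ P_{++}^{(h)}`, then `N ∣ h` and `λ = (h/N, …, h/N)`.  Consequently every
`σ₁`-orbit on `P_{++}^{(h)}` has size `1` or `N`, and if `N ∤ h` the action of
`σ₁` on `P_{++}^{(h)}` is free. -/
theorem sigma1_prime_orbits (N h : ℕ) (hN : N.Prime) (hh : N < h) :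
    (∀ l ∈ Ppp N h, ∀ s : ℕ, 1 ≤ s → s ≤ N - 1 → (sigma1 N h)^[s] l = l →
        N ∣ h ∧ l = fun _ => (h : ℤ) / (N : ℤ)) ∧
    (∀ l ∈ Ppp N h,
        sigma1 N h l = l ∨ ∀ s : ℕ, 1 ≤ s → s < N → (sigma1 N h)^[s] l ≠ l) ∧
    (¬ N ∣ h → ∀ l ∈ Ppp N h, ∀ s : ℕ, 1 ≤ s → s ≤ N - 1 →
        (sigma1 N h)^[s] l ≠ l) :=
  sigma1_prime_orbits_general N h hN
end

section
/- Let N ≥ 2 and let m′, m″ be positive integers such that N divides h′ := m′+N and N divides h″ := m″+N (hence N divides h := m′+m″+N). Define Δ(x) := (N²−1)(x²−N²)/(24Nx) and Δ_F := Δ(h′) + Δ(h″) − Δ(h). Then Δ_F = (1/24)(C_G − C_H), where C_G = (N²−1)m′/(m′+N) + (N²−1)m″/(m″+N) and C_H = (N²−1)(m′+m″)/(m′+m″+N); consequently exp(2πi·Δ_F)·exp(−2πi·(C_G−C_H)/24) = 1, i.e., the twisted univalence of the fixed point, ω̇_F, equals 1. -/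
/-! Writing `Δ(x) = (N²−1)/24 · (x/N − N/x)` and the level-`m` central charge as
`(N²−1)(1 − N/(m+N))`, the terms `N/h` of `Δ_F` and of `(C_G − C_H)/24` agree, while the
linear terms of `Δ_F` add up to `(N²−1)/24 · (h′ + h″ − h)/N = (N²−1)/24`, the constant
part of `(C_G − C_H)/24`. So `Δ_F = (C_G − C_H)/24`, and the two phases of `ω̇_F` cancel. -/

open Complex

/-- The conformal dimension `Δ(x) = (N²−1)(x²−N²)/(24Nx)` of the weight with
all shifted labels equal to `x/N`. -/
noncomputable def Dfun (N : ℕ) (x : ℝ) : ℝ :=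
  ((N : ℝ) ^ 2 - 1) * (x ^ 2 - (N : ℝ) ^ 2) / (24 * N * x)

/-- The central charge `C_G` of `G = SU(N)_{m′} × SU(N)_{m″}`. -/
noncomputable def CG (N : ℕ) (m' m'' : ℝ) : ℝ :=
  ((N : ℝ) ^ 2 - 1) * m' / (m' + N) + ((N : ℝ) ^ 2 - 1) * m'' / (m'' + N)

/-- The central charge `C_H` of `H = SU(N)_{m′+m″}`. -/
noncomputable def CH (N : ℕ) (m' m'' : ℝ) : ℝ :=
  ((N : ℝ) ^ 2 - 1) * (m' + m'') / (m' + m'' + N)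

lemma Dfun_eq_mul_sub {N : ℕ} {x : ℝ} (hN : (N : ℝ) ≠ 0) (hx : x ≠ 0) :
    Dfun N x = ((N : ℝ) ^ 2 - 1) / 24 * (x / N - N / x) := by
  unfold Dfun
  field_simp

lemma centralCharge_eq_mul_one_sub {N : ℕ} {m : ℝ} (hm : m + N ≠ 0) :
    ((N : ℝ) ^ 2 - 1) * m / (m + N) = ((N : ℝ) ^ 2 - 1) * (1 - N / (m + N)) := by
  field_simp
  ring

theorem Dfun_fixedPoint_eq_centralCharge_sub {N : ℕ} {m' m'' : ℝ} (hN : (N : ℝ) ≠ 0)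
    (h' : m' + N ≠ 0) (h'' : m'' + N ≠ 0) (h : m' + m'' + N ≠ 0) :
    Dfun N (m' + N) + Dfun N (m'' + N) - Dfun N (m' + m'' + N) =
      1 / 24 * (CG N m' m'' - CH N m' m'') := by
  have linear_part : (m' + N) / N + (m'' + N) / N - (m' + m'' + N) / N = 1 := by
    field_simp
    ring
  rw [Dfun_eq_mul_sub hN h', Dfun_eq_mul_sub hN h'', Dfun_eq_mul_sub hN h, CG, CH,
    centralCharge_eq_mul_one_sub h', centralCharge_eq_mul_one_sub h'',
    centralCharge_eq_mul_one_sub h]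
  linear_combination ((N : ℝ) ^ 2 - 1) / 24 * linear_part

lemma exp_mul_exp_neg_eq_one {Δ c : ℝ} (h : Δ = 1 / 24 * c) :
    Complex.exp (2 * Real.pi * I * Δ) * Complex.exp (-2 * Real.pi * I * c / 24) = 1 := by
  rw [← Complex.exp_add, h]
  push_cast
  ring_nf
  exact Complex.exp_zero

theorem fixed_point_twisted_univalence_general (N m' m'' : ℕ) (hN : 2 ≤ N) :
    Dfun N ((m' : ℝ) + N) + Dfun N ((m'' : ℝ) + N) - Dfun N ((m' : ℝ) + m'' + N) =
        (1 / 24) * (CG N m' m'' - CH N m' m'') ∧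
      Complex.exp (2 * Real.pi * I *
            (Dfun N ((m' : ℝ) + N) + Dfun N ((m'' : ℝ) + N) -
              Dfun N ((m' : ℝ) + m'' + N))) *
          Complex.exp (-2 * Real.pi * I * (CG N m' m'' - CH N m' m'') / 24) = 1 := by
  have hN_pos : (0 : ℝ) < N := by exact_mod_cast (by omega : 0 < N)
  have hΔ := Dfun_fixedPoint_eq_centralCharge_sub (m' := m') (m'' := m'') hN_pos.ne'
    (by positivity) (by positivity) (by positivity)
  refine ⟨hΔ, ?_⟩
  simpa using exp_mul_exp_neg_eq_one hΔ

/-- For the diagonal coset with `N ∣ h′ = m′+N` and `N ∣ h″ = m″+N`, the conformal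
dimension `Δ_F = Δ(h′) + Δ(h″) − Δ(h)` of the unique fixed point equals
`(1/24)(C_G − C_H)`; hence the twisted univalence
`ω̇_F = exp(2πiΔ_F)·exp(−2πi(C_G−C_H)/24)` equals `1`. -/
theorem fixed_point_twisted_univalence (N m' m'' : ℕ) (hN : 2 ≤ N)
    (hm' : 0 < m') (hm'' : 0 < m'')
    (h1 : N ∣ m' + N) (h2 : N ∣ m'' + N) :
    Dfun N ((m' : ℝ) + N) + Dfun N ((m'' : ℝ) + N) - Dfun N ((m' : ℝ) + m'' + N) =
        (1 / 24) * (CG N m' m'' - CH N m' m'') ∧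
      Complex.exp (2 * Real.pi * I *
            (Dfun N ((m' : ℝ) + N) + Dfun N ((m'' : ℝ) + N) -
              Dfun N ((m' : ℝ) + m'' + N))) *
          Complex.exp (-2 * Real.pi * I * (CG N m' m'' - CH N m' m'') / 24) = 1 :=
  fixed_point_twisted_univalence_general N m' m'' hN
end

section
/- The real number r := 2cos(2π/5) + 2cos(4π/5) + 2cos(6π/5) + 2 equals (1−√5)/2; in particular r < 0, while √(2/10)·sin(25π/10) = 1/√5 > 0. Hence the product r·(1/√5) is strictly negative. -/
open Real

/-! Everything reduces to `cos (π / 5) = (1 + √5) / 4`: the angles `4π/5` and `6π/5` are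
`π ∓ π/5`, and `2π/5` is its double. The value `(1 - √5)/2` of the character is negative
since `√5 > 1`, while `sin (25π/10) = sin (π/2 + 2π) = 1`. -/

theorem cos_two_pi_div_five : cos (2 * π / 5) = (√5 - 1) / 4 := by
  rw [show 2 * π / 5 = 2 * (π / 5) by ring, cos_two_mul, cos_pi_div_five]
  nlinarith [sq_sqrt (show (0 : ℝ) ≤ 5 by norm_num)]

theorem cos_four_pi_div_five : cos (4 * π / 5) = -((1 + √5) / 4) := by
  rw [show 4 * π / 5 = π - π / 5 by ring, cos_pi_sub, cos_pi_div_five]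

theorem cos_six_pi_div_five : cos (6 * π / 5) = -((1 + √5) / 4) := by
  rw [show 6 * π / 5 = π / 5 + π by ring, cos_add_pi, cos_pi_div_five]

theorem two_mul_cos_fifths_add_two :
    2 * cos (2 * π / 5) + 2 * cos (4 * π / 5) + 2 * cos (6 * π / 5) + 2 = (1 - √5) / 2 := by
  rw [cos_two_pi_div_five, cos_four_pi_div_five, cos_six_pi_div_five]
  ring

theorem one_sub_sqrt_five_div_two_neg : (1 - √5) / 2 < 0 := by
  have : 1 < √5 := by rw [lt_sqrt zero_le_one]; norm_num
  linarith

theorem sin_twentyfive_pi_div_ten : sin (25 * π / 10) = 1 := by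
  rw [show 25 * π / 10 = π / 2 + 2 * π by ring, sin_add_two_pi, sin_pi_div_two]

theorem sqrt_two_div_ten_mul_sin_twentyfive_pi_div_ten :
    √(2 / 10) * sin (25 * π / 10) = 1 / √5 := by
  rw [sin_twentyfive_pi_div_ten, mul_one, show (2 : ℝ) / 10 = 1 / 5 by norm_num,
    sqrt_div' 1 (by norm_num), sqrt_one]

/-- For the coset `SU(2)_8 ⊂ SU(3)_2`:
`r = 2cos(2π/5) + 2cos(4π/5) + 2cos(6π/5) + 2 = (1−√5)/2 < 0`, while
`√(2/10)·sin(25π/10) = 1/√5 > 0`, hence `r·(1/√5) < 0`; this shows that the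
Kac–Wakimoto Hypothesis fails for this inclusion. -/
theorem kwh_counterexample :
    (2 * Real.cos (2 * π / 5) + 2 * Real.cos (4 * π / 5) +
        2 * Real.cos (6 * π / 5) + 2 = (1 - Real.sqrt 5) / 2) ∧
    (2 * Real.cos (2 * π / 5) + 2 * Real.cos (4 * π / 5) +
        2 * Real.cos (6 * π / 5) + 2 < 0) ∧
    (Real.sqrt (2 / 10) * Real.sin (25 * π / 10) = 1 / Real.sqrt 5) ∧
    (0 < 1 / Real.sqrt 5) ∧
    ((2 * Real.cos (2 * π / 5) + 2 * Real.cos (4 * π / 5) +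
        2 * Real.cos (6 * π / 5) + 2) * (1 / Real.sqrt 5) < 0) := by
  have hneg := two_mul_cos_fifths_add_two ▸ one_sub_sqrt_five_div_two_neg
  have hpos : 0 < 1 / √5 := by positivity
  exact ⟨two_mul_cos_fifths_add_two, hneg, sqrt_two_div_ten_mul_sin_twentyfive_pi_div_ten, hpos,
    mul_neg_of_neg_of_pos hneg hpos⟩
end
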